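/- Let P₁ and P₂ be intersecting shortest paths in an undirected positively-weighted graph, and let v be the first vertex of P₁ lying in P₁ ∩ P₂. Then either P₁ ∩ P₂ = {v}, or v is the first vertex of P₂ lying in P₁ ∩ P₂, or v is the last vertex of P₂ lying in P₁ ∩ P₂. -/

import Mathlib

/-- A graph with real edge weights that are strictly positive on edges. -/
structure WeightedGraph (V : Type*) where
  Adj : V → V → Prop
  w : V → V → ℝ
  pos : ∀ {u v : V}, Adj u v → 0 < w u v

namespace WeightedGraph

variable {V : Type*} (G : WeightedGraph V)

/-- The graph is undirected: adjacency and weights are symmetric. -/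
def IsUndirected : Prop :=
  (∀ u v, G.Adj u v → G.Adj v u) ∧ (∀ u v, G.w u v = G.w v u)

/-- Total weight of a vertex sequence (sum of weights of consecutive pairs). -/
def weight (l : List V) : ℝ :=
  ((l.zip l.tail).map fun p => G.w p.1 p.2).sum

/-- A (simple) path: a nonempty sequence of distinct vertices with consecutive
vertices adjacent. -/
def IsPath (l : List V) : Prop :=
  l ≠ [] ∧ l.Chain' G.Adj ∧ l.Nodup

/-- A path beginning at `u` and ending at `v`. -/
def IsPathFrom (l : List V) (u v : V) : Prop :=
  G.IsPath l ∧ l.head? = some u ∧ l.getLast? = some v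

/-- A shortest path between its endpoints: a path whose total weight is at most
that of any path with the same endpoints. -/
def IsShortest (l : List V) : Prop :=
  G.IsPath l ∧ ∀ l', G.IsPath l' → l'.head? = l.head? → l'.getLast? = l.getLast? →
    G.weight l ≤ G.weight l'

/-- Weighted graph distance from `u` to `v`. -/
noncomputable def dist (u v : V) : ℝ :=
  sInf {c : ℝ | ∃ l, G.IsPathFrom l u v ∧ G.weight l = c}

end WeightedGraph

/-- `v` is the first vertex of `P` lying in the set `S`. -/
def FirstIn {V : Type*} (P : List V) (S : Set V) (v : V) : Prop :=
  v ∈ S ∧ ∃ pre post : List V, P = pre ++ v :: post ∧ ∀ x ∈ pre, x ∉ S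

/-- `v` is the last vertex of `P` lying in the set `S`. -/
def LastIn {V : Type*} (P : List V) (S : Set V) (v : V) : Prop :=
  v ∈ S ∧ ∃ pre post : List V, P = pre ++ v :: post ∧ ∀ x ∈ post, x ∉ S

/-!
If `v` is neither the first nor the last common vertex on `P₂`, pick common vertices `a` before
and `b` after `v` on `P₂`. Both come after `v` on `P₁`; reversing `P₂` if necessary, `P₁` visits
`v, a, b` in this order while `P₂` visits `a, v, b`. Replacing the `v–b` segment of `P₁` by that of
`P₂`, and the `a–b` segment of `P₂` by that of `P₁`, gives walks no lighter than the shortest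
paths they come from; adding the two inequalities gives `d(v, a) + d(a, v) ≤ 0`, contradicting
positivity of the weights.
-/

namespace List

variable {α : Type*}

theorem exists_eq_append_cons_of_cons_sublist {a : α} {s l : List α} (h : a :: s <+ l) :
    ∃ A r, l = A ++ a :: r ∧ s <+ r := by
  obtain ⟨r₁, r₂, rfl, hr₁, hr₂⟩ := cons_sublist_iff.1 h
  obtain ⟨A, M, rfl⟩ := append_of_mem hr₁
  exact ⟨A, M ++ r₂, by simp, hr₂.trans (sublist_append_right M r₂)⟩

theorem exists_eq_append_cons_append_cons_of_not_nodup {l : List α} (h : ¬l.Nodup) :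
    ∃ A M B x, l = A ++ x :: M ++ x :: B := by
  obtain ⟨x, hx⟩ : ∃ x, [x, x] <+ l := by simpa [nodup_iff_sublist] using h
  obtain ⟨A, r, rfl, hr⟩ := exists_eq_append_cons_of_cons_sublist hx
  obtain ⟨M, B, rfl⟩ := append_of_mem (singleton_sublist.1 hr)
  exact ⟨A, M, B, x, by simp⟩

theorem exists_eq_append_cons_append_cons_append_cons {x y z : α} {l : List α}
    (h : [x, y, z] <+ l) : ∃ A M N B, l = A ++ x :: M ++ y :: N ++ z :: B := by
  obtain ⟨A, r, rfl, hr⟩ := exists_eq_append_cons_of_cons_sublist h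
  obtain ⟨M, r', rfl, hr'⟩ := exists_eq_append_cons_of_cons_sublist hr
  obtain ⟨N, B, rfl⟩ := append_of_mem (singleton_sublist.1 hr')
  exact ⟨A, M, N, B, by simp⟩

theorem pair_sublist_or_pair_sublist {x y : α} {l : List α} (hx : x ∈ l) (hy : y ∈ l)
    (hxy : x ≠ y) : [x, y] <+ l ∨ [y, x] <+ l := by
  obtain ⟨s, t, rfl⟩ := append_of_mem hx
  rcases mem_append.1 hy with hs | ht
  · exact .inr ((singleton_sublist.2 hs).append (cons_sublist_cons.2 (nil_sublist t)))
  · have hyt := (mem_cons.1 ht).resolve_left hxy.symm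
    exact .inl (((singleton_sublist.2 hyt).cons_cons x).trans (sublist_append_right s _))

theorem isChain_append_cons_append_cons {R : α → α → Prop} {A M B : List α} {x y : α} :
    IsChain R (A ++ x :: M ++ y :: B) ↔
      IsChain R (A ++ [x]) ∧ IsChain R (x :: M ++ [y]) ∧ IsChain R (y :: B) := by
  rw [isChain_split, append_assoc, cons_append, isChain_split, and_assoc]

end List

open scoped List

namespace WeightedGraph

variable {V : Type*} (G : WeightedGraph V)

@[simp] lemma weight_nil : G.weight [] = 0 := by simp [weight]

@[simp] lemma weight_singleton (x : V) : G.weight [x] = 0 := by simp [weight]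

@[simp] lemma weight_cons_cons (x y : V) (l : List V) :
    G.weight (x :: y :: l) = G.w x y + G.weight (y :: l) := by simp [weight]

lemma weight_append_cons (A : List V) (x : V) (B : List V) :
    G.weight (A ++ x :: B) = G.weight (A ++ [x]) + G.weight (x :: B) := by
  induction A using List.twoStepInduction with
  | nil => simp
  | singleton => simp
  | cons_cons a b A _ ih =>
    simp only [List.cons_append, weight_cons_cons] at ih ⊢
    rw [ih]
    ring

lemma weight_append_cons_append_cons (A M B : List V) (x y : V) :
    G.weight (A ++ x :: M ++ y :: B) =
      G.weight (A ++ [x]) + G.weight (x :: M ++ [y]) + G.weight (y :: B) := by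
  rw [weight_append_cons, List.append_assoc, List.cons_append, weight_append_cons]

lemma weight_nonneg {l : List V} (hl : l.IsChain G.Adj) : 0 ≤ G.weight l := by
  induction l using List.twoStepInduction with
  | nil => simp
  | singleton => simp
  | cons_cons x y l _ ih =>
    rw [List.isChain_cons_cons] at hl
    rw [weight_cons_cons]
    exact add_nonneg (G.pos hl.1).le (ih y hl.2)

lemma weight_pos : ∀ {l : List V}, l.IsChain G.Adj → 2 ≤ l.length → 0 < G.weight l
  | x :: y :: l, hl, _ => by
    rw [List.isChain_cons_cons] at hl
    rw [weight_cons_cons]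
    exact add_pos_of_pos_of_nonneg (G.pos hl.1) (G.weight_nonneg hl.2)

lemma weight_reverse (hw : ∀ u v, G.w u v = G.w v u) (l : List V) :
    G.weight l.reverse = G.weight l := by
  induction l using List.twoStepInduction with
  | nil => simp
  | singleton => simp
  | cons_cons x y l _ ih =>
    rw [List.reverse_cons, List.reverse_cons, List.append_assoc, List.singleton_append,
      weight_append_cons, ← List.reverse_cons, ih]
    simp [hw y x, add_comm]

/-- Deleting the closed subwalk between two visits of a repeated vertex. -/
lemma exists_isPath_of_isChain {l : List V} (hne : l ≠ []) (hl : l.IsChain G.Adj) :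
    ∃ p, G.IsPath p ∧ p.head? = l.head? ∧ p.getLast? = l.getLast? ∧ G.weight p ≤ G.weight l := by
  induction hn : l.length using Nat.strong_induction_on generalizing l with
  | _ n ih =>
  by_cases hnd : l.Nodup
  · exact ⟨l, ⟨hne, hl, hnd⟩, rfl, rfl, le_rfl⟩
  obtain ⟨A, M, B, x, rfl⟩ := List.exists_eq_append_cons_append_cons_of_not_nodup hnd
  obtain ⟨hA, hM, hB⟩ := List.isChain_append_cons_append_cons.1 hl
  obtain ⟨p, hp, hph, hpl, hpw⟩ := ih (A ++ x :: B).length (by simp at hn ⊢; omega) (by simp)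
    (List.isChain_split.2 ⟨hA, hB⟩) rfl
  refine ⟨p, hp, by simp [hph], by simp only [hpl, List.getLast?_append_cons], ?_⟩
  rw [weight_append_cons_append_cons]
  rw [weight_append_cons] at hpw
  linarith [G.weight_nonneg hM]

variable {G}

lemma IsShortest.weight_le_of_isChain {P l : List V} (hP : G.IsShortest P) (hne : l ≠ [])
    (hl : l.IsChain G.Adj) (hhead : l.head? = P.head?) (hlast : l.getLast? = P.getLast?) :
    G.weight P ≤ G.weight l := by
  obtain ⟨p, hp, hph, hpl, hpw⟩ := G.exists_isPath_of_isChain hne hl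
  exact (hP.2 p hp (hph.trans hhead) (hpl.trans hlast)).trans hpw

lemma IsShortest.weight_segment_le {A M N B : List V} {x y : V}
    (hP : G.IsShortest (A ++ x :: M ++ y :: B)) (hN : (x :: N ++ [y]).IsChain G.Adj) :
    G.weight (x :: M ++ [y]) ≤ G.weight (x :: N ++ [y]) := by
  obtain ⟨hA, -, hB⟩ := List.isChain_append_cons_append_cons.1 hP.1.2.1
  have h := hP.weight_le_of_isChain (l := A ++ x :: N ++ y :: B) (by simp)
    (List.isChain_append_cons_append_cons.2 ⟨hA, hN, hB⟩) (by simp)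
    (by simp only [List.getLast?_append_cons])
  rw [weight_append_cons_append_cons, weight_append_cons_append_cons] at h
  linarith

lemma IsPath.reverse (hAdj : ∀ u v, G.Adj u v → G.Adj v u) {l : List V} (h : G.IsPath l) :
    G.IsPath l.reverse :=
  ⟨by simpa using h.1, List.isChain_reverse.2 (h.2.1.imp fun u v => hAdj u v),
    List.nodup_reverse.2 h.2.2⟩

lemma IsShortest.reverse (hG : G.IsUndirected) {l : List V} (h : G.IsShortest l) :
    G.IsShortest l.reverse := by
  refine ⟨h.1.reverse hG.1, fun l' hl' hhead hlast => ?_⟩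
  have := h.2 l'.reverse (hl'.reverse hG.1) (by simp [hlast]) (by simp [hhead])
  simpa only [G.weight_reverse hG.2] using this

lemma IsShortest.not_isShortest_of_sublist {P Q : List V} {x y z : V} (hP : G.IsShortest P)
    (hxyz : [x, y, z] <+ P) (hyxz : [y, x, z] <+ Q) : ¬G.IsShortest Q := by
  intro hQ
  obtain ⟨A₁, M₁, N₁, B₁, rfl⟩ := List.exists_eq_append_cons_append_cons_append_cons hxyz
  obtain ⟨A₂, M₂, N₂, B₂, rfl⟩ := List.exists_eq_append_cons_append_cons_append_cons hyxz
  have hPc := hP.1.2.1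
  have hQc := hQ.1.2.1
  have hxz := (show G.IsShortest (A₁ ++ x :: (M₁ ++ y :: N₁) ++ z :: B₁) by simpa using hP)
    |>.weight_segment_le (N := N₂) (hQc.infix ⟨A₂ ++ y :: M₂, B₂, by simp⟩)
  have hyz := (show G.IsShortest (A₂ ++ y :: (M₂ ++ x :: N₂) ++ z :: B₂) by simpa using hQ)
    |>.weight_segment_le (N := N₁) (hPc.infix ⟨A₁ ++ x :: M₁, B₁, by simp⟩)
  have hsplit : ∀ (u v : V) (M N : List V), G.weight (u :: (M ++ v :: N) ++ [z]) =
      G.weight (u :: M ++ [v]) + G.weight (v :: N ++ [z]) := fun u v M N => by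
    simpa using G.weight_append_cons (u :: M) v (N ++ [z])
  have hxy : 0 < G.weight (x :: M₁ ++ [y]) :=
    G.weight_pos (hPc.infix ⟨A₁, N₁ ++ z :: B₁, by simp⟩) (by simp)
  have hyx : 0 ≤ G.weight (y :: M₂ ++ [x]) :=
    G.weight_nonneg (hQc.infix ⟨A₂, N₂ ++ z :: B₂, by simp⟩)
  rw [hsplit] at hxz hyz
  linarith

end WeightedGraph

/-- Intersection types are exhaustive: if `P₁` and `P₂` are intersecting shortest
paths in an undirected positively-weighted graph and `v` is the first vertex of
`P₁` lying in `P₁ ∩ P₂`, then either `P₁ ∩ P₂ = {v}`, or `v` is the first vertex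
of `P₂` in `P₁ ∩ P₂`, or `v` is the last vertex of `P₂` in `P₁ ∩ P₂`. -/
theorem intersection_types_exhaustive {V : Type*} (G : WeightedGraph V)
    (hG : G.IsUndirected) (P₁ P₂ : List V)
    (h₁ : G.IsShortest P₁) (h₂ : G.IsShortest P₂)
    (v : V) (hv : FirstIn P₁ {x | x ∈ P₁ ∧ x ∈ P₂} v) :
    ({x | x ∈ P₁ ∧ x ∈ P₂} = {v}) ∨
    FirstIn P₂ {x | x ∈ P₁ ∧ x ∈ P₂} v ∨
    LastIn P₂ {x | x ∈ P₁ ∧ x ∈ P₂} v := by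
  set S : Set V := {x | x ∈ P₁ ∧ x ∈ P₂}
  right
  by_contra! hFL
  obtain ⟨hvS, pre₁, post₁, hP₁, hpre₁⟩ := hv
  obtain ⟨pre₂, post₂, hP₂⟩ := List.append_of_mem hvS.2
  obtain ⟨a, ha₂, haS⟩ : ∃ a ∈ pre₂, a ∈ S := by
    by_contra! h
    exact hFL.1 ⟨hvS, pre₂, post₂, hP₂, h⟩
  obtain ⟨b, hb₂, hbS⟩ : ∃ b ∈ post₂, b ∈ S := by
    by_contra! h
    exact hFL.2 ⟨hvS, pre₂, post₂, hP₂, h⟩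
  have havb : [a, v, b] <+ P₂ :=
    hP₂ ▸ (List.singleton_sublist.2 ha₂).append ((List.singleton_sublist.2 hb₂).cons_cons v)
  obtain ⟨⟨hav, hab⟩, hvb⟩ : (a ≠ v ∧ a ≠ b) ∧ v ≠ b := by simpa using h₂.1.2.2.sublist havb
  have mem_post₁ : ∀ c ∈ S, c ≠ v → c ∈ post₁ := fun c hc hcv => by
    rcases List.mem_append.1 (hP₁ ▸ hc.1) with hpre | hpost
    · exact absurd hc (hpre₁ c hpre)
    · exact (List.mem_cons.1 hpost).resolve_left hcv
  have sublist₁ : ∀ {c d}, [c, d] <+ post₁ → [v, c, d] <+ P₁ := fun h =>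
    hP₁ ▸ (h.cons_cons v).trans (List.sublist_append_right _ _)
  rcases List.pair_sublist_or_pair_sublist (mem_post₁ a haS hav) (mem_post₁ b hbS hvb.symm) hab
    with hab₁ | hba₁
  · exact h₁.not_isShortest_of_sublist (sublist₁ hab₁) havb h₂
  · exact h₁.not_isShortest_of_sublist (sublist₁ hba₁) (by simpa using List.reverse_sublist.2 havb)
      (h₂.reverse hG)
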